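/- Let π : {0,1}^n → {0,1}^d be the coordinate projection, P ⊆ {0,1}^n a finite set, R = π(P), and A ⊆ P with B = π(A) and B^c = R \ B. Then the number of edges of the graph of conv(P) between A and P \ A is at least the number of edges of the graph of conv(R) between B and B^c. -/

import Mathlib

noncomputable section

/-- The dot product on `ℝ^n`. -/
def dot {n : ℕ} (c x : Fin n → ℝ) : ℝ := ∑ i, c i * x i

/-- The vertex set of the 0/1-cube in `ℝ^n`. -/
def cube01 (n : ℕ) : Set (Fin n → ℝ) := {x | ∀ i, x i = 0 ∨ x i = 1}

/-- `F` is the vertex set of a face of the polytope `conv P`, where `P` is the set of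
vertices of the polytope: there is a supporting linear functional attaining its maximum
on `P` exactly on `F`. -/
def IsFaceOf {n : ℕ} (P F : Set (Fin n → ℝ)) : Prop :=
  ∃ (c : Fin n → ℝ) (γ : ℝ), (∀ x ∈ P, dot c x ≤ γ) ∧ F = {x | x ∈ P ∧ dot c x = γ}

/-- `{x, y}` is an edge (1-dimensional face) of the polytope `conv P`. -/
def IsPolytopeEdge {n : ℕ} (P : Set (Fin n → ℝ)) (x y : Fin n → ℝ) : Prop :=
  x ∈ P ∧ y ∈ P ∧ x ≠ y ∧ IsFaceOf P {x, y}

/-- The number of edges of the graph of the polytope `conv P` with one endpoint in `A`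
and the other endpoint in `B`. -/
def polyEdgeCount {n : ℕ} (P A B : Set (Fin n → ℝ)) : ℕ :=
  {p : (Fin n → ℝ) × (Fin n → ℝ) | p.1 ∈ A ∧ p.2 ∈ B ∧ IsPolytopeEdge P p.1 p.2}.ncard

/-- Adjacency in the hypercube graph `Q^d`: the two points differ in exactly one coordinate. -/
def cubeAdj {d : ℕ} (x y : Fin d → ℝ) : Prop := {i | x i ≠ y i}.ncard = 1

/-- The number of hypercube-neighbors of `x` belonging to `C`. -/
def cubeDeg {d : ℕ} (x : Fin d → ℝ) (C : Set (Fin d → ℝ)) : ℕ :=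
  {y | y ∈ C ∧ cubeAdj x y}.ncard

/-- The number of hypercube edges with one endpoint in `A` and the other in `B`. -/
def cubeEdgeCount {d : ℕ} (A B : Set (Fin d → ℝ)) : ℕ :=
  {p : (Fin d → ℝ) × (Fin d → ℝ) | p.1 ∈ A ∧ p.2 ∈ B ∧ cubeAdj p.1 p.2}.ncard

/-- `R ⊆ {0,1}^d` is `ε`-good: (R1) every vertex of `R` has more than `(1-ε)d`
hypercube-neighbors in `R`; (R2) every `C ⊆ {0,1}^d` with `|C| ≥ 2^d/20` satisfies
`|C ∩ R| ≥ 2^d/40`. -/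
def epsGood {d : ℕ} (ε : ℝ) (R : Set (Fin d → ℝ)) : Prop :=
  R ⊆ cube01 d ∧
  (∀ x ∈ R, (1 - ε) * d < (cubeDeg x R : ℝ)) ∧
  (∀ C ⊆ cube01 d, (2 : ℝ) ^ d / 20 ≤ (C.ncard : ℝ) → (2 : ℝ) ^ d / 40 ≤ ((C ∩ R).ncard : ℝ))

/-- Projection onto the first `d` coordinates. -/
def proj {n d : ℕ} (h : d ≤ n) (x : Fin n → ℝ) : Fin d → ℝ := fun i => x (Fin.castLE h i)

/-- The characteristic vector of a subset of `[n]`. -/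
def charVec {n : ℕ} (A : Finset (Fin n)) : Fin n → ℝ := fun i => if i ∈ A then 1 else 0

/-- A face of the cube `[0,1]^n`, given by fixing the coordinates in the support of `σ`;
its dimension is the number of indices where `σ` is `none`. -/
def cubeFace {n : ℕ} (σ : Fin n → Option Bool) : Set (Fin n → ℝ) :=
  {z | z ∈ cube01 n ∧ ∀ i b, σ i = some b → z i = if b then 1 else 0}

/-!
Let `Q` be the fibre of `P` over an edge `{x, y}` of `conv (π P)`; it is a face of `conv P`. Starting
from `a ∈ A` over `x`, the simplex method for a functional separating the two halves of the fibre
finds an edge `{a, b}` of `conv Q` with `b` over `y`, hence `b ∉ A`; being an edge of a face, it is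
an edge of `conv P`. The edge is found by tilting a functional `ψ` exposing `a` towards `g` until
`ψ + t • g` first becomes constant on a second point, which is unique for generic `ψ`: three
distinct cube vertices are never collinear.
-/

open Matrix Filter Topology

section

variable {n d : ℕ}

lemma isFaceOf_iff {P F : Set (Fin n → ℝ)} :
    IsFaceOf P F ↔
      F ⊆ P ∧ ∃ (c : Fin n → ℝ) (γ : ℝ), (∀ x ∈ F, c ⬝ᵥ x = γ) ∧ ∀ x ∈ P \ F, c ⬝ᵥ x < γ := by
  constructor
  · rintro ⟨c, γ, hle, rfl⟩
    exact ⟨Set.sep_subset _ _, c, γ, fun x hx => hx.2,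
      fun x hx => (hle x hx.1).lt_of_ne fun h => hx.2 ⟨hx.1, h⟩⟩
  · rintro ⟨hFP, c, γ, hF, hlt⟩
    refine ⟨c, γ, fun x hx => ?_, Set.ext fun x => ⟨fun hx => ⟨hFP hx, hF x hx⟩, ?_⟩⟩
    · by_cases hxF : x ∈ F
      · exact (hF x hxF).le
      · exact (hlt x ⟨hx, hxF⟩).le
    · rintro ⟨hxP, hx⟩
      by_contra hxF
      exact (hlt x ⟨hxP, hxF⟩).ne hx

/-- Finiteness matters: for general convex sets an exposed face of an exposed face need not be
exposed. -/
lemma IsFaceOf.trans {P Q F : Set (Fin n → ℝ)} (hP : P.Finite) (hQ : IsFaceOf P Q)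
    (hF : IsFaceOf Q F) : IsFaceOf P F := by
  obtain ⟨hQP, c₁, γ₁, hc₁Q, hc₁⟩ := isFaceOf_iff.1 hQ
  obtain ⟨hFQ, c₂, γ₂, hc₂F, hc₂⟩ := isFaceOf_iff.1 hF
  have hsmall : ∀ᶠ ε in 𝓝 (0 : ℝ), ∀ x ∈ P \ Q, ε * (c₂ ⬝ᵥ x - γ₂) < γ₁ - c₁ ⬝ᵥ x := by
    refine hP.sdiff.eventually_all.2 fun x hx => ?_
    have hlim : Tendsto (fun ε : ℝ => ε * (c₂ ⬝ᵥ x - γ₂)) (𝓝 0) (𝓝 0) := by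
      simpa using (tendsto_id (x := 𝓝 (0 : ℝ))).mul_const (c₂ ⬝ᵥ x - γ₂)
    exact hlim.eventually (gt_mem_nhds (sub_pos.2 (hc₁ x hx)))
  obtain ⟨ε, hεP, hε⟩ := ((hsmall.filter_mono nhdsWithin_le_nhds).and
    (self_mem_nhdsWithin : ∀ᶠ ε in 𝓝[>] (0 : ℝ), 0 < ε)).exists
  refine isFaceOf_iff.2 ⟨hFQ.trans hQP, c₁ + ε • c₂, γ₁ + ε * γ₂, fun x hx => ?_, fun x hx => ?_⟩
  · rw [add_dotProduct, smul_dotProduct, smul_eq_mul, hc₁Q x (hFQ hx), hc₂F x hx]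
  · rw [add_dotProduct, smul_dotProduct, smul_eq_mul]
    by_cases hxQ : x ∈ Q
    · have := hc₂ x ⟨hxQ, hx.2⟩
      rw [hc₁Q x hxQ]
      nlinarith
    · linarith [hεP x ⟨hx.1, hxQ⟩]

lemma exists_dotProduct_eq_dotProduct_apply (f : (Fin n → ℝ) →ₗ[ℝ] (Fin d → ℝ))
    (c : Fin d → ℝ) : ∃ c' : Fin n → ℝ, ∀ p, c' ⬝ᵥ p = c ⬝ᵥ f p :=
  ⟨c ᵥ* LinearMap.toMatrix' f, fun p => by rw [← LinearMap.toMatrix'_mulVec, dotProduct_mulVec]⟩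

lemma IsFaceOf.preimage (f : (Fin n → ℝ) →ₗ[ℝ] (Fin d → ℝ)) {P : Set (Fin n → ℝ)}
    {F : Set (Fin d → ℝ)} (hF : IsFaceOf (f '' P) F) : IsFaceOf P {p ∈ P | f p ∈ F} := by
  obtain ⟨c, γ, hle, rfl⟩ := hF
  obtain ⟨c', hc'⟩ := exists_dotProduct_eq_dotProduct_apply f c
  refine ⟨c', γ, fun p hp => (hc' p).trans_le (hle _ ⟨p, hp, rfl⟩), ?_⟩
  ext p
  constructor
  · rintro ⟨hp, -, h⟩
    exact ⟨hp, (hc' p).trans h⟩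
  · rintro ⟨hp, h⟩
    exact ⟨hp, ⟨p, hp, rfl⟩, (hc' p).symm.trans h⟩

lemma cube01_finite (n : ℕ) : (cube01 n).Finite :=
  (Set.Finite.pi fun _ => Set.toFinite ({0, 1} : Set ℝ)).subset fun _ hx i _ => hx i

lemma dotProduct_lt_of_mem_cube01 {a q : Fin n → ℝ} (ha : a ∈ cube01 n) (hq : q ∈ cube01 n)
    (hqa : q ≠ a) : (fun i => 2 * a i - 1) ⬝ᵥ q < (fun i => 2 * a i - 1) ⬝ᵥ a := by
  obtain ⟨i, hi⟩ := Function.ne_iff.1 hqa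
  refine Finset.sum_lt_sum (fun j _ => ?_) ⟨i, Finset.mem_univ i, ?_⟩
  · rcases ha j with h | h <;> rcases hq j with h' | h' <;> norm_num [h, h']
  · rcases ha i with h | h <;> rcases hq i with h' | h' <;> simp_all

lemma eq_of_smul_sub_eq_smul_sub {a q q' : Fin n → ℝ} (ha : a ∈ cube01 n) (hq : q ∈ cube01 n)
    (hq' : q' ∈ cube01 n) {l l' : ℝ} (hl : l ≠ 0) (hl' : l' ≠ 0)
    (h : l • (a - q) = l' • (a - q')) : q = q' := by
  funext i
  have hi := congrFun h i
  simp only [Pi.smul_apply, Pi.sub_apply, smul_eq_mul] at hi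
  rcases ha i with h₁ | h₁ <;> rcases hq i with h₂ | h₂ <;> rcases hq' i with h₃ | h₃ <;>
    simp_all

lemma dense_setOf_dotProduct_ne_zero {v : Fin n → ℝ} (hv : v ≠ 0) :
    Dense {ψ : Fin n → ℝ | ψ ⬝ᵥ v ≠ 0} := by
  let ℓ : (Fin n → ℝ) →ₗ[ℝ] ℝ := (dotProductBilin ℝ ℝ).flip v
  have hint : interior (LinearMap.ker ℓ : Set (Fin n → ℝ)) = ∅ := by
    by_contra hne
    have htop := Submodule.eq_top_of_nonempty_interior' _ (Set.nonempty_iff_ne_empty.2 hne)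
    have hvv : v ⬝ᵥ v = 0 := by
      simpa [ℓ] using (htop ▸ Submodule.mem_top : v ∈ LinearMap.ker ℓ)
    exact hv (dotProduct_self_eq_zero.1 hvv)
  convert interior_eq_empty_iff_dense_compl.1 hint using 1
  ext ψ
  simp [ℓ]

/-- The `t` at which `ψ + t • g` takes the same value at `a` and at `q`. -/
def tiltThreshold (ψ g a q : Fin n → ℝ) : ℝ := (ψ ⬝ᵥ a - ψ ⬝ᵥ q) / (g ⬝ᵥ q - g ⬝ᵥ a)

lemma add_smul_dotProduct_sub_eq (ψ g a q : Fin n → ℝ) (h : g ⬝ᵥ a ≠ g ⬝ᵥ q) (t : ℝ) :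
    (ψ + t • g) ⬝ᵥ q - (ψ + t • g) ⬝ᵥ a = (g ⬝ᵥ q - g ⬝ᵥ a) * (t - tiltThreshold ψ g a q) := by
  have : g ⬝ᵥ q - g ⬝ᵥ a ≠ 0 := sub_ne_zero.2 h.symm
  simp only [tiltThreshold, add_dotProduct, smul_dotProduct, smul_eq_mul]
  field_simp
  ring

lemma exists_isFaceOf_pair_of_injOn_tiltThreshold {Q : Set (Fin n → ℝ)} (hQ : Q.Finite)
    {a ψ g : Fin n → ℝ} (ha : a ∈ Q) (hψ : ∀ q ∈ Q, q ≠ a → ψ ⬝ᵥ q < ψ ⬝ᵥ a)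
    (hD : {q ∈ Q | g ⬝ᵥ a < g ⬝ᵥ q}.Nonempty)
    (hinj : Set.InjOn (tiltThreshold ψ g a) {q ∈ Q | g ⬝ᵥ a < g ⬝ᵥ q}) :
    ∃ b ∈ Q, g ⬝ᵥ a < g ⬝ᵥ b ∧ IsFaceOf Q {a, b} := by
  obtain ⟨b, hbD, hbmin⟩ :=
    Set.exists_min_image _ (tiltThreshold ψ g a) (hQ.subset (Set.sep_subset _ _)) hD
  obtain ⟨hbQ, hgb⟩ := hbD
  have hba : b ≠ a := by rintro rfl; exact lt_irrefl _ hgb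
  set t := tiltThreshold ψ g a b
  have ht : 0 < t := div_pos (sub_pos.2 (hψ b hbQ hba)) (sub_pos.2 hgb)
  refine ⟨b, hbQ, hgb, isFaceOf_iff.2 ⟨Set.insert_subset ha (Set.singleton_subset_iff.2 hbQ),
    ψ + t • g, (ψ + t • g) ⬝ᵥ a, ?_, ?_⟩⟩
  · rintro x (rfl | rfl)
    · rfl
    · linarith [add_smul_dotProduct_sub_eq ψ g a x hgb.ne t]
  · rintro q ⟨hqQ, hq⟩
    simp only [Set.mem_insert_iff, Set.mem_singleton_iff, not_or] at hq
    rcases lt_or_ge (g ⬝ᵥ a) (g ⬝ᵥ q) with hgq | hgq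
    · have hlt : t < tiltThreshold ψ g a q := (hbmin q ⟨hqQ, hgq⟩).lt_of_ne
        fun h => hq.2 (hinj ⟨hqQ, hgq⟩ ⟨hbQ, hgb⟩ h.symm)
      nlinarith [add_smul_dotProduct_sub_eq ψ g a q hgq.ne t]
    · have := hψ q hqQ hq.1
      simp only [add_dotProduct, smul_dotProduct, smul_eq_mul]
      nlinarith

lemma exists_injOn_tiltThreshold {Q : Set (Fin n → ℝ)} (hQ : Q ⊆ cube01 n) {a : Fin n → ℝ}
    (ha : a ∈ Q) (g : Fin n → ℝ) :
    ∃ ψ : Fin n → ℝ, (∀ q ∈ Q, q ≠ a → ψ ⬝ᵥ q < ψ ⬝ᵥ a) ∧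
      Set.InjOn (tiltThreshold ψ g a) {q ∈ Q | g ⬝ᵥ a < g ⬝ᵥ q} := by
  have hQfin : Q.Finite := (cube01_finite n).subset hQ
  set D := {q ∈ Q | g ⬝ᵥ a < g ⬝ᵥ q}
  set W := {w : (Fin n → ℝ) × (Fin n → ℝ) | w.1 ∈ D ∧ w.2 ∈ D ∧ w.1 ≠ w.2}
  -- `ψ` gives `w.1` and `w.2` the same threshold exactly when `ψ ⬝ᵥ v w = 0`
  let v : (Fin n → ℝ) × (Fin n → ℝ) → Fin n → ℝ := fun w =>
    (g ⬝ᵥ w.2 - g ⬝ᵥ a) • (a - w.1) - (g ⬝ᵥ w.1 - g ⬝ᵥ a) • (a - w.2)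
  have hW : W.Finite := (hQfin.prod hQfin).subset fun w hw => ⟨hw.1.1, hw.2.1.1⟩
  have hv : ∀ w ∈ W, v w ≠ 0 := fun w ⟨h₁, h₂, hne⟩ => sub_ne_zero.2 fun h =>
    hne (eq_of_smul_sub_eq_smul_sub (hQ ha) (hQ h₁.1) (hQ h₂.1)
      (sub_pos.2 h₂.2).ne' (sub_pos.2 h₁.2).ne' h)
  have hU : IsOpen (⋂ q ∈ Q \ {a}, {ψ : Fin n → ℝ | ψ ⬝ᵥ q < ψ ⬝ᵥ a}) :=
    hQfin.sdiff.isOpen_biInter fun q _ => isOpen_lt (by fun_prop) (by fun_prop)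
  have hG : Dense (⋂ w ∈ W, {ψ : Fin n → ℝ | ψ ⬝ᵥ v w ≠ 0}) :=
    dense_biInter_of_isOpen (fun w _ => isOpen_ne_fun (by fun_prop) (by fun_prop)) hW.countable
      fun w hw => dense_setOf_dotProduct_ne_zero (hv w hw)
  obtain ⟨ψ, hψU, hψG⟩ := hG.inter_open_nonempty _ hU ⟨fun i => 2 * a i - 1,
    Set.mem_iInter₂.2 fun q hq => dotProduct_lt_of_mem_cube01 (hQ ha) (hQ hq.1) hq.2⟩
  refine ⟨ψ, fun q hq hqa => Set.mem_iInter₂.1 hψU q ⟨hq, hqa⟩, fun q hq q' hq' h => ?_⟩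
  by_contra hne
  apply Set.mem_iInter₂.1 hψG (q, q') ⟨hq, hq', hne⟩
  rw [tiltThreshold, tiltThreshold, div_eq_div_iff (sub_pos.2 hq.2).ne' (sub_pos.2 hq'.2).ne'] at h
  simp only [v, dotProduct_sub, dotProduct_smul, smul_eq_mul]
  linarith

lemma exists_isFaceOf_pair_of_lt {Q : Set (Fin n → ℝ)} (hQ : Q ⊆ cube01 n) {a g : Fin n → ℝ}
    (ha : a ∈ Q) (hg : ∃ q ∈ Q, g ⬝ᵥ a < g ⬝ᵥ q) :
    ∃ b ∈ Q, g ⬝ᵥ a < g ⬝ᵥ b ∧ IsFaceOf Q {a, b} := by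
  obtain ⟨ψ, hψ, hinj⟩ := exists_injOn_tiltThreshold hQ ha g
  exact exists_isFaceOf_pair_of_injOn_tiltThreshold ((cube01_finite n).subset hQ) ha hψ hg hinj

lemma exists_isPolytopeEdge_of_isPolytopeEdge_image (f : (Fin n → ℝ) →ₗ[ℝ] (Fin d → ℝ))
    {P A : Set (Fin n → ℝ)} (hP : P ⊆ cube01 n) (hA : A ⊆ P) {x y : Fin d → ℝ}
    (hx : x ∈ f '' A) (hy : y ∈ f '' P \ f '' A) (hxy : IsPolytopeEdge (f '' P) x y) :
    ∃ a ∈ A, ∃ b ∈ P \ A, f a = x ∧ f b = y ∧ IsPolytopeEdge P a b := by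
  obtain ⟨a, haA, rfl⟩ := hx
  obtain ⟨⟨b₀, hb₀, rfl⟩, hb₀A⟩ := hy
  obtain ⟨-, -, hne, hface⟩ := hxy
  obtain ⟨g, hg⟩ := exists_dotProduct_eq_dotProduct_apply f (f b₀ - f a)
  have hsep : g ⬝ᵥ a < g ⬝ᵥ b₀ := by
    have hpos : 0 < (f b₀ - f a) ⬝ᵥ (f b₀ - f a) :=
      (Finset.sum_nonneg fun i _ => mul_self_nonneg _).lt_of_ne
        fun h => hne.symm (sub_eq_zero.1 (dotProduct_self_eq_zero.1 h.symm))
    rw [hg, hg]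
    linarith [dotProduct_sub (f b₀ - f a) (f b₀) (f a)]
  obtain ⟨b, ⟨hbP, hbQ⟩, hgb, hab⟩ := exists_isFaceOf_pair_of_lt
    (Q := {p ∈ P | f p ∈ ({f a, f b₀} : Set _)}) (fun p hp => hP hp.1)
    ⟨hA haA, Or.inl rfl⟩ ⟨b₀, ⟨hb₀, Or.inr rfl⟩, hsep⟩
  have hfb : f b = f b₀ := hbQ.resolve_left fun h => by
    rw [hg, hg, h] at hgb
    exact lt_irrefl _ hgb
  refine ⟨a, haA, b, ⟨hbP, fun hbA => hb₀A ⟨b, hbA, hfb⟩⟩, rfl, hfb, hA haA, hbP,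
    fun h => hne (by rw [h, hfb]), ?_⟩
  exact (hface.preimage f).trans ((cube01_finite n).subset hP) hab

lemma polyEdgeCount_image_le (f : (Fin n → ℝ) →ₗ[ℝ] (Fin d → ℝ)) {P A : Set (Fin n → ℝ)}
    (hP : P ⊆ cube01 n) (hA : A ⊆ P) :
    polyEdgeCount (f '' P) (f '' A) (f '' P \ f '' A) ≤ polyEdgeCount P A (P \ A) := by
  have hPfin : P.Finite := (cube01_finite n).subset hP
  have hT : {p : (Fin n → ℝ) × (Fin n → ℝ) |
      p.1 ∈ A ∧ p.2 ∈ P \ A ∧ IsPolytopeEdge P p.1 p.2}.Finite :=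
    (hPfin.prod hPfin).subset fun p hp => ⟨hA hp.1, hp.2.1.1⟩
  refine (Set.ncard_le_ncard ?_ (hT.image (Prod.map f f))).trans (Set.ncard_image_le hT)
  rintro ⟨x, y⟩ ⟨hx, hy, hxy⟩
  obtain ⟨a, haA, b, hb, rfl, rfl, hab⟩ :=
    exists_isPolytopeEdge_of_isPolytopeEdge_image f hP hA hx hy hxy
  exact ⟨(a, b), ⟨haA, hb, hab⟩, rfl⟩

end

/-- Second part of the projection lemma: the number of edges of the graph of `conv P`
between `A` and `P \ A` is at least the number of edges of the graph of the projected
polytope `conv R` between `B = π(A)` and `R \ B`, where `R = π(P)`. -/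
theorem edges_ge_projected_edges {n d : ℕ} (hd : d ≤ n)
    (P : Set (Fin n → ℝ)) (hP : P ⊆ cube01 n) (A : Set (Fin n → ℝ)) (hA : A ⊆ P) :
    polyEdgeCount (proj hd '' P) (proj hd '' A) ((proj hd '' P) \ (proj hd '' A))
      ≤ polyEdgeCount P A (P \ A) :=
  polyEdgeCount_image_le (LinearMap.funLeft ℝ ℝ (Fin.castLE hd)) hP hA
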